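/- arXiv:1301.3681 — 4 statements merged into one kernel-verified Lean document; each statement's English description precedes it below -/
import Mathlib

section
/- Write A = A₁ + A₂, where A₁ is the upper triangular matrix with (A₁) i i = 1 for all i, (A₁) i j = A i j for i < j and (A₁) i j = 0 for i > j, and A₂ = A − A₁ (so A₂ is lower triangular with 1's on the diagonal). Then A₁ is invertible over ℤ, and the matrix of the Coxeter element w = s 1 ∘ s 2 ∘ ⋯ ∘ s n in the standard basis equals −A₁⁻¹·A₂ = Iₙ − A₁⁻¹·A. -/
open Matrix Filter Pointwise

namespace KacMoodyPaper

variable {n : ℕ}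

/-- `A` is a generalized Cartan matrix. -/
def IsGCM (A : Matrix (Fin n) (Fin n) ℤ) : Prop :=
  (∀ i, A i i = 2) ∧ (∀ i j, i ≠ j → A i j ≤ 0) ∧ (∀ i j, A i j = 0 ↔ A j i = 0)

/-- The simple reflection `s i` as a linear map: `s i v = v - (A *ᵥ v) i • e i`. -/
def sMap (A : Matrix (Fin n) (Fin n) ℤ) (i : Fin n) : (Fin n → ℤ) →ₗ[ℤ] (Fin n → ℤ) where
  toFun v := v - (A.mulVec v i) • Pi.single i 1
  map_add' x y := by
    simp only [Matrix.mulVec_add, Pi.add_apply, add_smul]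
    abel
  map_smul' c x := by
    simp only [Matrix.mulVec_smul, Pi.smul_apply, smul_eq_mul, RingHom.id_apply, smul_sub,
      smul_smul]

theorem sMap_involutive (A : Matrix (Fin n) (Fin n) ℤ) (i : Fin n) (h2 : A i i = 2)
    (v : Fin n → ℤ) : sMap A i (sMap A i v) = v := by
  have hAe : A.mulVec (Pi.single i 1) i = A i i := by
    simp [Matrix.mulVec_single]
  simp only [sMap, LinearMap.coe_mk, AddHom.coe_mk, Matrix.mulVec_sub, Matrix.mulVec_smul,
    Pi.sub_apply, Pi.smul_apply, hAe, h2, smul_eq_mul]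
  ring_nf

/-- The simple reflection `s i` as a `ℤ`-linear automorphism of `ℤ^n`
(determined by `s i (e j) = e j - A i j • e i`). -/
def s (A : Matrix (Fin n) (Fin n) ℤ) (h2 : ∀ i, A i i = 2) (i : Fin n) :
    (Fin n → ℤ) ≃ₗ[ℤ] (Fin n → ℤ) :=
  LinearEquiv.ofLinear (sMap A i) (sMap A i)
    (LinearMap.ext fun v => sMap_involutive A i (h2 i) v)
    (LinearMap.ext fun v => sMap_involutive A i (h2 i) v)

/-- The Coxeter element `w = s 1 ∘ s 2 ∘ ⋯ ∘ s n` (applying `s n` first). -/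
def cox (A : Matrix (Fin n) (Fin n) ℤ) (h2 : ∀ i, A i i = 2) :
    (Fin n → ℤ) ≃ₗ[ℤ] (Fin n → ℤ) :=
  (List.ofFn (fun i : Fin n => s A h2 i)).prod

/-- The Weyl group: the subgroup of `GL(n, ℤ)` generated by the simple reflections. -/
def weyl (A : Matrix (Fin n) (Fin n) ℤ) (h2 : ∀ i, A i i = 2) :
    Subgroup ((Fin n → ℤ) ≃ₗ[ℤ] (Fin n → ℤ)) :=
  Subgroup.closure (Set.range (s A h2))

/-- The word length of `ω` with respect to the generators `s 1, …, s n`. -/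
noncomputable def len (A : Matrix (Fin n) (Fin n) ℤ) (h2 : ∀ i, A i i = 2)
    (ω : (Fin n → ℤ) ≃ₗ[ℤ] (Fin n → ℤ)) : ℕ :=
  sInf {k | ∃ f : Fin k → Fin n, ω = (List.ofFn (fun j => s A h2 (f j))).prod}

/-- `v ∈ ℤ^n` is positive: nonzero with all coordinates `≥ 0`. -/
def IsPos (v : Fin n → ℤ) : Prop := v ≠ 0 ∧ ∀ i, 0 ≤ v i

/-- The height of a vector: the sum of its coordinates. -/
def ht (v : Fin n → ℤ) : ℤ := ∑ i, v i

/-- The graph `Γ` on `{1, …, n}` with an edge between `i ≠ j` iff `A i j ≠ 0`. -/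
def gcmGraph (A : Matrix (Fin n) (Fin n) ℤ) (hsym : ∀ i j, A i j = 0 ↔ A j i = 0) :
    SimpleGraph (Fin n) where
  Adj i j := i ≠ j ∧ A i j ≠ 0
  symm := by
    constructor
    rintro i j ⟨hij, h⟩
    exact ⟨hij.symm, fun h0 => h ((hsym i j).mpr h0)⟩
  loopless := by constructor; rintro i ⟨h, -⟩; exact h rfl

/-- `A` is indecomposable: the graph `Γ` is connected. -/
def Indecomposable (A : Matrix (Fin n) (Fin n) ℤ) (hsym : ∀ i j, A i j = 0 ↔ A j i = 0) :
    Prop :=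
  (gcmGraph A hsym).Connected

/-- `A` is of indefinite type: there is `u > 0` (componentwise) with `A·u < 0` componentwise. -/
def IndefiniteType (A : Matrix (Fin n) (Fin n) ℤ) : Prop :=
  ∃ u : Fin n → ℤ, (∀ i, 0 < u i) ∧ ∀ i, (A.mulVec u) i < 0

/-- The fundamental set `K`: positive vectors with connected support and `A·v ≤ 0`. -/
def fundK (A : Matrix (Fin n) (Fin n) ℤ) (hsym : ∀ i j, A i j = 0 ↔ A j i = 0) :
    Set (Fin n → ℤ) :=
  {v | IsPos v ∧ ((gcmGraph A hsym).induce {i | v i ≠ 0}).Connected ∧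
    ∀ i, (A.mulVec v) i ≤ 0}

/-- The real roots: the `W`-orbits of the standard basis vectors. -/
def realRoots (A : Matrix (Fin n) (Fin n) ℤ) (h2 : ∀ i, A i i = 2) : Set (Fin n → ℤ) :=
  {v | ∃ g ∈ weyl A h2, ∃ i : Fin n, v = g (Pi.single i 1)}

/-- The positive imaginary roots: the `W`-orbit of the fundamental set `K`. -/
def posImRoots (A : Matrix (Fin n) (Fin n) ℤ) (h2 : ∀ i, A i i = 2)
    (hsym : ∀ i j, A i j = 0 ↔ A j i = 0) : Set (Fin n → ℤ) :=
  {v | ∃ g ∈ weyl A h2, ∃ k ∈ fundK A hsym, v = g k}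

/-- The set of roots `Δ`. -/
def roots (A : Matrix (Fin n) (Fin n) ℤ) (h2 : ∀ i, A i i = 2)
    (hsym : ∀ i j, A i j = 0 ↔ A j i = 0) : Set (Fin n → ℤ) :=
  realRoots A h2 ∪ posImRoots A h2 hsym ∪ (-(posImRoots A h2 hsym))

/-- The set of positive roots `Δ₊`. -/
def posRoots (A : Matrix (Fin n) (Fin n) ℤ) (h2 : ∀ i, A i i = 2)
    (hsym : ∀ i j, A i j = 0 ↔ A j i = 0) : Set (Fin n → ℤ) :=
  {v ∈ roots A h2 hsym | IsPos v}

/-- The set of negative roots `Δ₋ = -Δ₊`. -/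
def negRoots (A : Matrix (Fin n) (Fin n) ℤ) (h2 : ∀ i, A i i = 2)
    (hsym : ∀ i j, A i j = 0 ↔ A j i = 0) : Set (Fin n → ℤ) :=
  -(posRoots A h2 hsym)


/-!
Write `P i` for the matrix of `s 1 ∘ ⋯ ∘ s i` and `D i A` for `A` with all rows of index `≥ i`
replaced by zero. The matrix of `s i` is `1 - E_ii A`, and the `i`-th column of `A₁ - D (i-1) A`
is the unit vector `e_i`: above the diagonal the entries of `A₁` and `A` cancel, below it both
vanish. Hence `A₁ P i = (A₁ - D (i-1) A)(1 - E_ii A) = A₁ - D i A` by induction, and for `i = n`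
this reads `A₁ w = A₁ - A`; since `A₁` is unitriangular it is invertible.
-/

section

variable {R : Type*} [CommRing R]

def upperUnitriangularPart (A : Matrix (Fin n) (Fin n) R) : Matrix (Fin n) (Fin n) R :=
  Matrix.of fun i j => if i = j then 1 else if i < j then A i j else 0

def firstRows (m : ℕ) (A : Matrix (Fin n) (Fin n) R) : Matrix (Fin n) (Fin n) R :=
  Matrix.of fun i j => if (i : ℕ) < m then A i j else 0

theorem det_upperUnitriangularPart (A : Matrix (Fin n) (Fin n) R) :
    (upperUnitriangularPart A).det = 1 := by
  rw [det_of_isUpperTriangular]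
  · simp [upperUnitriangularPart]
  · intro i j (hji : j < i)
    simp [upperUnitriangularPart, hji.ne', hji.not_gt]

theorem firstRows_zero (A : Matrix (Fin n) (Fin n) R) : firstRows 0 A = 0 := by
  ext; simp [firstRows]

theorem firstRows_self (A : Matrix (Fin n) (Fin n) R) : firstRows n A = A := by
  ext i j; simp [firstRows]

theorem firstRows_succ (A : Matrix (Fin n) (Fin n) R) (i : Fin n) :
    firstRows (i + 1) A = firstRows i A + single i i 1 * A := by
  ext k j
  by_cases hk : k = i
  · subst hk; simp [firstRows]
  · have hlt : (k : ℕ) < i + 1 ↔ (k : ℕ) < i := by omega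
    simp only [firstRows, of_apply, Matrix.add_apply, hlt, single_mul_apply_of_ne _ _ _ _ _ hk,
      add_zero]

theorem sub_firstRows_mul_single (A : Matrix (Fin n) (Fin n) R) (i : Fin n) :
    (upperUnitriangularPart A - firstRows i A) * single i i 1 = single i i 1 := by
  ext k j
  by_cases hj : j = i
  · subst hj
    rcases lt_trichotomy k j with h | h | h
    · simp [upperUnitriangularPart, firstRows, h, h.ne, single_apply_of_row_ne h.ne']
    · subst h; simp [upperUnitriangularPart, firstRows]
    · simp [upperUnitriangularPart, firstRows, h.ne', h.not_gt, single_apply_of_row_ne h.ne]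
  · simp [hj, single_apply_of_col_ne _ _ (Ne.symm hj)]

theorem upperUnitriangularPart_mul_prod_take (A : Matrix (Fin n) (Fin n) R) {m : ℕ}
    (hm : m ≤ n) :
    upperUnitriangularPart A *
        (((List.finRange n).take m).map fun i => 1 - single i i 1 * A).prod =
      upperUnitriangularPart A - firstRows m A := by
  induction m with
  | zero => simp [firstRows_zero]
  | succ m ih =>
    obtain ⟨i, rfl⟩ : ∃ i : Fin n, (i : ℕ) = m := ⟨⟨m, hm⟩, rfl⟩
    have htake : (List.finRange n).take (i + 1) = (List.finRange n).take i ++ [i] := by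
      rw [List.take_add_one, List.getElem?_eq_getElem (by simp)]
      simp
    rw [htake, List.map_append, List.prod_append, ← mul_assoc, ih (by omega), List.map_singleton,
      List.prod_singleton, mul_sub, mul_one, ← mul_assoc, sub_firstRows_mul_single, sub_sub,
      ← firstRows_succ]

end

theorem toMatrix'_sMap (A : Matrix (Fin n) (Fin n) ℤ) (i : Fin n) :
    LinearMap.toMatrix' (sMap A i) = 1 - single i i 1 * A := by
  ext k j
  by_cases hk : k = i
  · subst hk; simp [sMap, mulVec_single, Pi.single_apply, one_apply]
  · simp [sMap, mulVec_single, Pi.single_apply, one_apply, hk]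

theorem toMatrix'_cox (A : Matrix (Fin n) (Fin n) ℤ) (h2 : ∀ i, A i i = 2) :
    LinearMap.toMatrix' (cox A h2).toLinearMap =
      ((List.finRange n).map fun i => 1 - single i i 1 * A).prod := by
  have h := map_list_prod ((LinearMap.toMatrixAlgEquiv' (R := ℤ) (n := Fin n)).toMonoidHom.comp
    LinearEquiv.automorphismGroup.toLinearMapMonoidHom) (List.ofFn (s A h2))
  rw [List.map_ofFn] at h
  refine h.trans ?_
  rw [List.ofFn_eq_map]
  exact congrArg List.prod (List.map_congr_left fun i _ => toMatrix'_sMap A i)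

theorem upperUnitriangularPart_mul_toMatrix'_cox (A : Matrix (Fin n) (Fin n) ℤ)
    (h2 : ∀ i, A i i = 2) :
    upperUnitriangularPart A * LinearMap.toMatrix' (cox A h2).toLinearMap =
      upperUnitriangularPart A - A := by
  have h := upperUnitriangularPart_mul_prod_take A (le_refl n)
  rwa [List.take_of_length_le (by simp), firstRows_self, ← toMatrix'_cox A h2] at h

theorem coxeter_matrix_eq_general (n : ℕ) (A : Matrix (Fin n) (Fin n) ℤ)
    (hA : IsGCM A) (A₁ A₂ : Matrix (Fin n) (Fin n) ℤ)
    (hA₁ : ∀ i j, A₁ i j = if i = j then 1 else if i < j then A i j else 0)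
    (hA₂ : A₂ = A - A₁) :
    IsUnit A₁ ∧
      LinearMap.toMatrix' (cox A hA.1).toLinearMap = -(A₁⁻¹ * A₂) ∧
      LinearMap.toMatrix' (cox A hA.1).toLinearMap = 1 - A₁⁻¹ * A := by
  replace hA₁ : A₁ = upperUnitriangularPart A := Matrix.ext hA₁
  have hdet : IsUnit A₁.det := by
    rw [hA₁, det_upperUnitriangularPart]
    exact isUnit_one
  have hcox : LinearMap.toMatrix' (cox A hA.1).toLinearMap = 1 - A₁⁻¹ * A := by
    calc LinearMap.toMatrix' (cox A hA.1).toLinearMap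
        = A₁⁻¹ * (A₁ * LinearMap.toMatrix' (cox A hA.1).toLinearMap) :=
          (nonsing_inv_mul_cancel_left _ _ hdet).symm
      _ = A₁⁻¹ * (A₁ - A) := by rw [hA₁, upperUnitriangularPart_mul_toMatrix'_cox]
      _ = 1 - A₁⁻¹ * A := by rw [mul_sub, nonsing_inv_mul _ hdet]
  refine ⟨(isUnit_iff_isUnit_det _).mpr hdet, ?_, hcox⟩
  rw [hcox, hA₂, mul_sub, nonsing_inv_mul _ hdet, neg_sub]

/-- `A₁` (upper triangular part with `1`s on the diagonal) is invertible over
`ℤ`, and the matrix of the Coxeter element `w = s 1 ∘ ⋯ ∘ s n` in the standard basis equals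
`-A₁⁻¹ * A₂ = 1 - A₁⁻¹ * A`, where `A₂ = A - A₁`. -/
theorem coxeter_matrix_eq (n : ℕ) (hn : 1 ≤ n) (A : Matrix (Fin n) (Fin n) ℤ)
    (hA : IsGCM A) (A₁ A₂ : Matrix (Fin n) (Fin n) ℤ)
    (hA₁ : ∀ i j, A₁ i j = if i = j then 1 else if i < j then A i j else 0)
    (hA₂ : A₂ = A - A₁) :
    IsUnit A₁ ∧
      LinearMap.toMatrix' (cox A hA.1).toLinearMap = -(A₁⁻¹ * A₂) ∧
      LinearMap.toMatrix' (cox A hA.1).toLinearMap = 1 - A₁⁻¹ * A :=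
  coxeter_matrix_eq_general n A hA A₁ A₂ hA₁ hA₂

end KacMoodyPaper
end

section
/- For every v ∈ ℤ^n, the Coxeter element w = s 1 ∘ s 2 ∘ ⋯ ∘ s n satisfies w(v) = v if and only if A·v = 0; in other words, the fixed space of the Coxeter element in ℤ^n is exactly the kernel of A. -/
open Matrix Filter Pointwise

namespace KacMoodyPaper

variable {n : ℕ}

section CoordinatewiseProduct

variable {ι R M : Type*} [Semiring R] [AddCommMonoid M] [Module R M]
  {f : ι → (ι → M) ≃ₗ[R] (ι → M)}

theorem prod_map_apply_of_notMem (hf : ∀ i x j, j ≠ i → f i x j = x j) {l : List ι} {j : ι}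
    (hj : j ∉ l) (x : ι → M) : (l.map f).prod x j = x j := by
  induction l with
  | nil => rfl
  | cons i l ih =>
    rw [List.mem_cons, not_or] at hj
    rw [List.map_cons, List.prod_cons, LinearEquiv.mul_apply, hf i _ j hj.1, ih hj.2]

theorem prod_map_apply_eq_self_iff (hf : ∀ i x j, j ≠ i → f i x j = x j) {l : List ι}
    (hl : l.Nodup) (x : ι → M) : (l.map f).prod x = x ↔ ∀ i ∈ l, f i x = x := by
  induction l with
  | nil => simp
  | cons i l ih =>
    rw [List.nodup_cons] at hl
    rw [List.map_cons, List.prod_cons, LinearEquiv.mul_apply, List.forall_mem_cons, ← ih hl.2]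
    constructor
    · intro hfix
      -- `f i` moves only coordinate `i`, which the product over `l` does not touch
      have hprod : (l.map f).prod x = x := by
        ext j
        by_cases hji : j = i
        · exact hji ▸ prod_map_apply_of_notMem hf hl.1 x
        · rw [← hf i ((l.map f).prod x) j hji, hfix]
      exact ⟨by rwa [hprod] at hfix, hprod⟩
    · rintro ⟨hi, hprod⟩
      rw [hprod, hi]

end CoordinatewiseProduct

section SimpleReflection

variable {A : Matrix (Fin n) (Fin n) ℤ} {h2 : ∀ i, A i i = 2}

theorem s_apply (i : Fin n) (x : Fin n → ℤ) :
    s A h2 i x = x - (A *ᵥ x) i • Pi.single i 1 := rfl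

theorem s_apply_of_ne {i j : Fin n} (hji : j ≠ i) (x : Fin n → ℤ) : s A h2 i x j = x j := by
  simp [s_apply, Pi.single_eq_of_ne hji]

theorem s_apply_eq_self_iff (i : Fin n) (x : Fin n → ℤ) :
    s A h2 i x = x ↔ (A *ᵥ x) i = 0 := by
  rw [s_apply, sub_eq_self, smul_eq_zero, Pi.single_eq_zero_iff]
  simp

theorem cox_eq_prod : cox A h2 = ((List.finRange n).map (s A h2)).prod := by
  rw [cox, List.ofFn_eq_map]

end SimpleReflection

theorem coxeter_fixed_iff_ker_general (n : ℕ) (A : Matrix (Fin n) (Fin n) ℤ)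
    (hA : IsGCM A) (v : Fin n → ℤ) :
    cox A hA.1 v = v ↔ A.mulVec v = 0 := by
  rw [cox_eq_prod,
    prod_map_apply_eq_self_iff (fun _ x _ h ↦ s_apply_of_ne h x) (List.nodup_finRange n)]
  simp only [List.mem_finRange, true_imp_iff, s_apply_eq_self_iff]
  exact funext_iff.symm

/-- the fixed space in `ℤ^n` of the Coxeter element `w = s 1 ∘ ⋯ ∘ s n` is
exactly the kernel of `A`: for every `v ∈ ℤ^n`, `w v = v ↔ A · v = 0`. -/
theorem coxeter_fixed_iff_ker (n : ℕ) (hn : 1 ≤ n) (A : Matrix (Fin n) (Fin n) ℤ)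
    (hA : IsGCM A) (v : Fin n → ℤ) :
    cox A hA.1 v = v ↔ A.mulVec v = 0 :=
  coxeter_fixed_iff_ker_general n A hA v

end KacMoodyPaper
end

section
/- Let G be a locally compact Hausdorff topological group, let a ∈ G, and let K be a compact subgroup of G such that a K a^{−1} = K and K ⊆ con(a). Then K is the trivial subgroup. -/
/-!
Conjugation by `a` restricts to a continuous surjective endomorphism `φ` of the compact group `K`
with `φⁿ x → 1` for every `x`. Baire's theorem upgrades this pointwise convergence to uniform
convergence on a nonempty open set `O`: `φⁿ '' O ⊆ U` for all large `n`. Finitely many translates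
`g⁻¹ • O` cover `K`, so for one large `n` every `φⁿ y = φⁿ g⁻¹ * φⁿ (g * y)` lies in `U * U`;
as `φⁿ` is surjective, `K ⊆ U * U` for every neighbourhood `U` of `1`.
-/

open Filter Topology

namespace KacMoodyPaper

/-- The contraction group of `a`: all `g` with `a^n g a^{-n} → 1` as `n → ∞`. -/
def con {G : Type*} [Group G] [TopologicalSpace G] (a : G) : Set G :=
  {g | Filter.Tendsto (fun k : ℕ => a ^ k * g * (a ^ k)⁻¹) Filter.atTop (nhds 1)}

open Function Set

theorem exists_isOpen_nonempty_eventually_mapsTo {X Y : Type*} [TopologicalSpace X] [BaireSpace X]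
    [Nonempty X] [TopologicalSpace Y] [RegularSpace Y] {f : ℕ → X → Y}
    (hf : ∀ n, Continuous (f n)) {y : Y} (hy : ∀ x, Tendsto (fun n => f n x) atTop (𝓝 y))
    {W : Set Y} (hW : W ∈ 𝓝 y) :
    ∃ O : Set X, IsOpen O ∧ O.Nonempty ∧ ∃ N, ∀ n ≥ N, MapsTo (f n) O W := by
  obtain ⟨C, hC, hCc, hCW⟩ := exists_mem_nhds_isClosed_subset hW
  let S : ℕ → Set X := fun N => ⋂ n ≥ N, f n ⁻¹' C
  have hS : ∀ N, IsClosed (S N) := fun N =>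
    isClosed_biInter fun n _ => hCc.preimage (hf n)
  have hcover : ⋃ N, S N = univ := eq_univ_of_forall fun x => by
    simpa [S] using eventually_atTop.1 ((hy x).eventually_mem hC)
  obtain ⟨N, hN⟩ := nonempty_interior_of_iUnion_of_closed hS hcover
  refine ⟨interior (S N), isOpen_interior, hN, N, fun n hn x hx => hCW ?_⟩
  exact mem_iInter₂.1 (interior_subset hx) n hn

theorem eq_one_of_forall_tendsto_iterate {K : Type*} [Group K] [TopologicalSpace K]
    [IsTopologicalGroup K] [CompactSpace K] [T2Space K] {φ : K →* K} (hcont : Continuous φ)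
    (hsurj : Surjective φ) (hφ : ∀ x, Tendsto (fun n => φ^[n] x) atTop (𝓝 1)) (x : K) :
    x = 1 := by
  refine (specializes_iff_pure.2 fun W hW => ?_).eq
  obtain ⟨U, hUo, hU1, hUU⟩ := exists_open_nhds_one_mul_subset hW
  obtain ⟨O, hOo, hOne, N, hN⟩ := exists_isOpen_nonempty_eventually_mapsTo
    hcont.iterate hφ (hUo.mem_nhds hU1)
  obtain ⟨t, ht⟩ := compact_covered_by_mul_left_translates isCompact_univ
    (hOo.interior_eq.symm ▸ hOne)
  have hsmall : ∀ᶠ n in atTop, ∀ g ∈ t, φ^[n] g⁻¹ ∈ U :=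
    (eventually_all_finset t).2 fun g _ => (hφ g⁻¹).eventually_mem (hUo.mem_nhds hU1)
  obtain ⟨n, hnN, hn⟩ := ((eventually_ge_atTop N).and hsmall).exists
  obtain ⟨y, rfl⟩ := hsurj.iterate n x
  obtain ⟨g, hg, hgy⟩ := mem_iUnion₂.1 (ht (mem_univ y))
  rw [← inv_mul_cancel_left g y, iterate_map_mul]
  exact hUU (mul_mem_mul (hn g hg) (hN n hnN hgy))

section SubgroupConj

variable {G : Type*} [Group G]

def subgroupConj (a : G) (K : Subgroup G) (hK : MapsTo (fun g => a * g * a⁻¹) K K) : K →* K :=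
  ((MulAut.conj a).toMonoidHom.comp K.subtype).codRestrict K fun x => hK x.2

variable {a : G} {K : Subgroup G} {hK : MapsTo (fun g => a * g * a⁻¹) K K}

@[simp]
theorem coe_subgroupConj_apply (x : K) : (subgroupConj a K hK x : G) = a * x * a⁻¹ := rfl

theorem coe_subgroupConj_iterate (n : ℕ) (x : K) :
    ((subgroupConj a K hK)^[n] x : G) = a ^ n * x * (a ^ n)⁻¹ := by
  induction n with
  | zero => simp
  | succ n ih =>
    rw [iterate_succ_apply', coe_subgroupConj_apply, ih]
    group

theorem continuous_subgroupConj [TopologicalSpace G] [IsTopologicalGroup G] :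
    Continuous (subgroupConj a K hK) :=
  continuous_induced_rng.2 <| (continuous_const.mul continuous_subtype_val).mul continuous_const

theorem subgroupConj_surjective (hsurj : SurjOn (fun g => a * g * a⁻¹) K K) :
    Surjective (subgroupConj a K hK) := fun y => by
  obtain ⟨x, hx, hxy⟩ := hsurj y.2
  exact ⟨⟨x, hx⟩, Subtype.ext hxy⟩

end SubgroupConj

theorem compact_invariant_subgroup_in_con_trivial_general {G : Type*} [Group G] [TopologicalSpace G]
    [IsTopologicalGroup G] [T2Space G]
    (a : G) (K : Subgroup G) (hKc : IsCompact (K : Set G))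
    (hconj : (fun g => a * g * a⁻¹) '' (K : Set G) = (K : Set G))
    (hsub : (K : Set G) ⊆ con a) :
    K = ⊥ := by
  have hmaps : MapsTo (fun g => a * g * a⁻¹) K K := mapsTo_iff_image_subset.2 hconj.subset
  have : CompactSpace K := isCompact_iff_compactSpace.1 hKc
  have hcon (x : K) : Tendsto (fun n => (subgroupConj a K hmaps)^[n] x) atTop (𝓝 1) := by
    rw [tendsto_subtype_rng]
    simp only [coe_subgroupConj_iterate, OneMemClass.coe_one]
    exact hsub x.2
  have : Subsingleton K := subsingleton_of_forall_eq 1 <|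
    eq_one_of_forall_tendsto_iterate continuous_subgroupConj
      (subgroupConj_surjective hconj.symm.subset) hcon
  exact Subgroup.eq_bot_of_subsingleton K

/-- in a locally compact Hausdorff topological group, a compact subgroup `K`
with `a K a⁻¹ = K` and `K ⊆ con(a)` is trivial. -/
theorem compact_invariant_subgroup_in_con_trivial {G : Type*} [Group G] [TopologicalSpace G]
    [IsTopologicalGroup G] [LocallyCompactSpace G] [T2Space G]
    (a : G) (K : Subgroup G) (hKc : IsCompact (K : Set G))
    (hconj : (fun g => a * g * a⁻¹) '' (K : Set G) = (K : Set G))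
    (hsub : (K : Set G) ⊆ con a) :
    K = ⊥ :=
  compact_invariant_subgroup_in_con_trivial_general a K hKc hconj hsub

end KacMoodyPaper
end

section
/- Let G be a locally compact, totally disconnected Hausdorff topological group and let H be a closed normal subgroup of G such that the quotient group G/H is compact. Then for every a ∈ G the contraction group con(a), and hence also its closure in G, is contained in H. -/
/-!
The quotient map `G → G ⧸ H` is a continuous homomorphism, so it sends `con a` into the
contraction group of the image of `a` in the compact Hausdorff group `G ⧸ H`. There contraction
groups are trivial: if `c` is a cluster point of the powers `b ^ k` and `x ∈ con b`, then
`c x c⁻¹` is a cluster point of `b ^ k x b ^ (-k) → 1`, hence `c x c⁻¹ = 1` and `x = 1`.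
Closedness of `H` then also absorbs the closure.
-/

open Filter Topology

namespace KacMoodyPaper

theorem one_mem_con {G : Type*} [Group G] [TopologicalSpace G] (a : G) : (1 : G) ∈ con a := by
  simp only [con, Set.mem_ofPred_eq, mul_one, mul_inv_cancel]
  exact tendsto_const_nhds

theorem map_mem_con {G Q : Type*} [Group G] [TopologicalSpace G] [Group Q] [TopologicalSpace Q]
    (φ : G →* Q) (hφ : Continuous φ) {a g : G} (hg : g ∈ con a) : φ g ∈ con (φ a) := by
  have := (hφ.tendsto 1).comp hg
  simpa only [con, Set.mem_ofPred_eq, Function.comp_def, map_mul, map_pow, map_inv, map_one]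
    using this

theorem con_eq_singleton_one {Q : Type*} [Group Q] [TopologicalSpace Q] [IsTopologicalGroup Q]
    [CompactSpace Q] [T2Space Q] (b : Q) : con b = {1} := by
  refine Set.Subset.antisymm (fun x hx => ?_) (Set.singleton_subset_iff.2 (one_mem_con b))
  obtain ⟨c, -, hc⟩ := isCompact_univ.exists_mapClusterPt (f := atTop) (u := fun k : ℕ => b ^ k)
    (le_principal_iff.2 univ_mem)
  have hconj : MapClusterPt (c * x * c⁻¹) atTop (fun k : ℕ => b ^ k * x * (b ^ k)⁻¹) :=
    hc.continuousAt_comp (f := fun y => y * x * y⁻¹) (by fun_prop)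
  exact conj_eq_one_iff.1 (eq_of_nhds_neBot (hconj.clusterPt.mono hx))

theorem con_subset_cocompact_closed_normal_general {G : Type*} [Group G] [TopologicalSpace G]
    [IsTopologicalGroup G]
    (H : Subgroup G) [H.Normal] (hHc : IsClosed (H : Set G))
    (hcompact : CompactSpace (G ⧸ H)) :
    ∀ a : G, con a ⊆ (H : Set G) ∧ closure (con a) ⊆ (H : Set G) := by
  intro a
  -- `hHc` and `hcompact` act as the instances making `G ⧸ H` a compact Hausdorff group.
  have hcon : con a ⊆ H := fun g hg => (QuotientGroup.eq_one_iff g).1 <|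
    (con_eq_singleton_one (a : G ⧸ H)).subset <|
      map_mem_con (QuotientGroup.mk' H) continuous_quotient_mk' hg
  exact ⟨hcon, closure_minimal hcon hHc⟩

/-- in a locally compact totally disconnected Hausdorff topological group `G`,
if `H` is a closed normal subgroup with `G/H` compact, then `con(a) ⊆ H` (and hence
`closure (con a) ⊆ H`) for every `a ∈ G`. -/
theorem con_subset_cocompact_closed_normal {G : Type*} [Group G] [TopologicalSpace G]
    [IsTopologicalGroup G] [LocallyCompactSpace G] [TotallyDisconnectedSpace G] [T2Space G]
    (H : Subgroup G) [H.Normal] (hHc : IsClosed (H : Set G))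
    (hcompact : CompactSpace (G ⧸ H)) :
    ∀ a : G, con a ⊆ (H : Set G) ∧ closure (con a) ⊆ (H : Set G) :=
  con_subset_cocompact_closed_normal_general H hHc hcompact

end KacMoodyPaper
end
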